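/- For n ∈ ℤ define the Malmquist–Takenaka functions φₙ(x) = √(2/π) · iⁿ · (1 + 2ix)ⁿ / (1 − 2ix)^{n+1} for x ∈ ℝ. Then for every n ∈ ℤ and all x ∈ ℝ: φₙ′(x) = −n φ_{n−1}(x) + i(2n+1) φₙ(x) + (n+1) φ_{n+1}(x). That is, the Malmquist–Takenaka system satisfies the tridiagonal skew-Hermitian differentiation relation with bₙ = n+1 and cₙ = 2n+1. -/

import Mathlib

/-- The Malmquist–Takenaka functions `φₙ(x) = √(2/π) iⁿ (1+2ix)ⁿ/(1−2ix)^{n+1}`, `n ∈ ℤ`. -/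
noncomputable def malmquistTakenaka (n : ℤ) (x : ℝ) : ℂ :=
  (Real.sqrt (2 / Real.pi) : ℂ) * Complex.I ^ n *
    (1 + 2 * Complex.I * x) ^ n / (1 - 2 * Complex.I * x) ^ (n + 1)

/-! Write `u = 1 + 2ix` and `v = 1 - 2ix`. Logarithmic differentiation gives
`φₙ' = 2i (n/u + (n+1)/v) φₙ`, and the definition gives the shift relations
`φₙ₊₁ = i (u/v) φₙ` and `φₙ₋₁ = -i (v/u) φₙ`. After dividing by `i φₙ` the claim becomes
`2n/u + 2(n+1)/v = n v/u + (2n+1) + (n+1) u/v`, which holds because `u + v = 2`. -/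

open Complex

theorem HasDerivAt.zpow_of_ne_zero {𝕜 𝕜' : Type*} [NontriviallyNormedField 𝕜]
    [NontriviallyNormedField 𝕜'] [NormedAlgebra 𝕜 𝕜'] {f : 𝕜 → 𝕜'} {f' : 𝕜'} {x : 𝕜}
    (n : ℤ) (hf : HasDerivAt f f' x) (hx : f x ≠ 0) :
    HasDerivAt (fun y => f y ^ n) (n * f' / f x * f x ^ n) x := by
  refine ((hasDerivAt_zpow n (f x) (Or.inl hx)).comp x hf).congr_deriv ?_
  rw [zpow_sub_one₀ hx]
  ring

lemma div_add_div_eq_of_add_eq_two {K : Type*} [Field K] (n u v : K) (hu : u ≠ 0) (hv : v ≠ 0)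
    (huv : u + v = 2) :
    2 * (n / u + (n + 1) / v) = n * (v / u) + (2 * n + 1) + (n + 1) * (u / v) := by
  field_simp
  linear_combination (-(n * v + (n + 1) * u)) * huv

lemma one_add_two_I_mul_ofReal_ne_zero (x : ℝ) : 1 + 2 * I * x ≠ 0 := by
  intro h
  simpa using congrArg re h

lemma one_sub_two_I_mul_ofReal_ne_zero (x : ℝ) : 1 - 2 * I * x ≠ 0 := by
  intro h
  simpa using congrArg re h

lemma hasDerivAt_one_add_two_I_mul_ofReal (x : ℝ) :
    HasDerivAt (fun y : ℝ => 1 + 2 * I * y) (2 * I) x := by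
  simpa using ((hasDerivAt_id x).ofReal_comp.const_mul (2 * I)).const_add 1

lemma hasDerivAt_one_sub_two_I_mul_ofReal (x : ℝ) :
    HasDerivAt (fun y : ℝ => 1 - 2 * I * y) (-(2 * I)) x := by
  simpa using ((hasDerivAt_id x).ofReal_comp.const_mul (2 * I)).const_sub 1

lemma malmquistTakenaka_add_one (n : ℤ) (x : ℝ) :
    malmquistTakenaka (n + 1) x =
      I * ((1 + 2 * I * x) / (1 - 2 * I * x)) * malmquistTakenaka n x := by
  have hu := one_add_two_I_mul_ofReal_ne_zero x
  have hv := one_sub_two_I_mul_ofReal_ne_zero x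
  simp only [malmquistTakenaka, zpow_add_one₀ I_ne_zero, zpow_add_one₀ hu, zpow_add_one₀ hv]
  field_simp

lemma malmquistTakenaka_sub_one (n : ℤ) (x : ℝ) :
    malmquistTakenaka (n - 1) x =
      -I * ((1 - 2 * I * x) / (1 + 2 * I * x)) * malmquistTakenaka n x := by
  have hu := one_add_two_I_mul_ofReal_ne_zero x
  have hv := one_sub_two_I_mul_ofReal_ne_zero x
  rw [← sub_add_cancel n 1, malmquistTakenaka_add_one (n - 1), add_sub_cancel_right]
  generalize 1 + 2 * I * x = u at hu ⊢
  generalize 1 - 2 * I * x = v at hv ⊢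
  field_simp
  linear_combination malmquistTakenaka (n - 1) x * I_sq

lemma malmquistTakenaka_hasDerivAt_mul_self (n : ℤ) (x : ℝ) :
    HasDerivAt (malmquistTakenaka n)
      (2 * I * (n / (1 + 2 * I * x) + (n + 1) / (1 - 2 * I * x)) * malmquistTakenaka n x) x := by
  have hu := one_add_two_I_mul_ofReal_ne_zero x
  have hv := one_sub_two_I_mul_ofReal_ne_zero x
  have hnum := ((hasDerivAt_one_add_two_I_mul_ofReal x).zpow_of_ne_zero n hu).const_mul
    ((Real.sqrt (2 / Real.pi) : ℂ) * I ^ n)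
  have hden := (hasDerivAt_one_sub_two_I_mul_ofReal x).zpow_of_ne_zero (n + 1) hv
  refine (hnum.div hden (zpow_ne_zero _ hv)).congr_deriv ?_
  simp only [malmquistTakenaka]
  push_cast
  generalize 1 + 2 * I * x = u at hu ⊢
  generalize 1 - 2 * I * x = v at hv ⊢
  field_simp
  ring

/-- the Malmquist–Takenaka functions satisfy the tridiagonal skew-Hermitian
differentiation relation `φₙ′ = −n φ_{n−1} + i(2n+1) φₙ + (n+1) φ_{n+1}`. -/
theorem malmquistTakenaka_hasDerivAt (n : ℤ) (x : ℝ) :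
    HasDerivAt (malmquistTakenaka n)
      (-(n : ℂ) * malmquistTakenaka (n - 1) x
        + Complex.I * (2 * (n : ℂ) + 1) * malmquistTakenaka n x
        + ((n : ℂ) + 1) * malmquistTakenaka (n + 1) x) x := by
  have key := div_add_div_eq_of_add_eq_two (n : ℂ) _ _ (one_add_two_I_mul_ofReal_ne_zero x)
    (one_sub_two_I_mul_ofReal_ne_zero x) (by ring)
  refine (malmquistTakenaka_hasDerivAt_mul_self n x).congr_deriv ?_
  rw [malmquistTakenaka_sub_one, malmquistTakenaka_add_one]
  linear_combination (I * malmquistTakenaka n x) * key
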